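/- For A, B ∈ B(H), the numerical radius of the block operator [[A, B], [B, A]] on H ⊕ H equals max{w(A + B), w(A − B)}. In particular, w([[0, B], [B, 0]]) = w(B). -/

import Mathlib

/-!
The unitary `(x, y) ↦ ((x + y)/√2, (x - y)/√2)` of `H ⊕ H` conjugates `[[A, B], [B, A]]` into the
diagonal operator `(A + B) ⊕ (A - B)`. The numerical radius is a unitary invariant, and that of a
diagonal operator `S ⊕ T` is `max (w S) (w T)`, because `⟪(S ⊕ T) z, z⟫ = ⟪S x, x⟫ + ⟪T y, y⟫` is at
most `w S ‖x‖² + w T ‖y‖²`. The second claim is the case `A = 0`, as `w (-B) = w B`.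
-/

noncomputable section
open ContinuousLinearMap

/-- The numerical radius of a bounded operator on a complex Hilbert space. -/
def numRadius {H : Type*} [NormedAddCommGroup H] [InnerProductSpace ℂ H]
    (T : H →L[ℂ] H) : ℝ :=
  sSup {r | ∃ x : H, ‖x‖ = 1 ∧ r = ‖(inner ℂ (T x) x : ℂ)‖}

/-- The block operator `[[A, B], [C, D]]` on the Hilbert space direct sum `H₁ ⊕ H₂`. -/
def blockOp {H₁ H₂ : Type*} [NormedAddCommGroup H₁] [InnerProductSpace ℂ H₁]
    [NormedAddCommGroup H₂] [InnerProductSpace ℂ H₂]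
    (A : H₁ →L[ℂ] H₁) (B : H₂ →L[ℂ] H₁) (C : H₁ →L[ℂ] H₂) (D : H₂ →L[ℂ] H₂) :
    WithLp 2 (H₁ × H₂) →L[ℂ] WithLp 2 (H₁ × H₂) :=
  (((WithLp.prodContinuousLinearEquiv 2 ℂ H₁ H₂).symm :
      (H₁ × H₂) →L[ℂ] WithLp 2 (H₁ × H₂))).comp
    (((A.comp (fst ℂ H₁ H₂) + B.comp (snd ℂ H₁ H₂)).prod
        (C.comp (fst ℂ H₁ H₂) + D.comp (snd ℂ H₁ H₂))).comp
      ((WithLp.prodContinuousLinearEquiv 2 ℂ H₁ H₂ :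
        WithLp 2 (H₁ × H₂) →L[ℂ] (H₁ × H₂))))

/-- The absolute value `|B| = (B*B)^{1/2}` of an operator between Hilbert spaces. -/
def absOp {E F : Type*} [NormedAddCommGroup E] [InnerProductSpace ℂ E] [CompleteSpace E]
    [NormedAddCommGroup F] [InnerProductSpace ℂ F] [CompleteSpace F]
    (B : E →L[ℂ] F) : E →L[ℂ] E :=
  CFC.sqrt ((ContinuousLinearMap.adjoint B).comp B)

variable {H : Type*} [NormedAddCommGroup H] [InnerProductSpace ℂ H] [CompleteSpace H]

open WithLp

section

variable {E F : Type*} [NormedAddCommGroup E] [InnerProductSpace ℂ E]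
  [NormedAddCommGroup F] [InnerProductSpace ℂ F]

lemma bddAbove_numRadius_set (T : E →L[ℂ] E) :
    BddAbove {r | ∃ x : E, ‖x‖ = 1 ∧ r = ‖(inner ℂ (T x) x : ℂ)‖} := by
  refine ⟨‖T‖, ?_⟩
  rintro r ⟨x, hx, rfl⟩
  calc ‖(inner ℂ (T x) x : ℂ)‖ ≤ ‖T x‖ * ‖x‖ := norm_inner_le_norm _ _
    _ ≤ ‖T‖ := by simpa [hx] using T.le_opNorm x

lemma numRadius_nonneg (T : E →L[ℂ] E) : 0 ≤ numRadius T :=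
  Real.sSup_nonneg (by rintro r ⟨x, -, rfl⟩; positivity)

lemma norm_inner_self_le_numRadius (T : E →L[ℂ] E) {x : E} (hx : ‖x‖ = 1) :
    ‖(inner ℂ (T x) x : ℂ)‖ ≤ numRadius T :=
  le_csSup (bddAbove_numRadius_set T) ⟨x, hx, rfl⟩

lemma numRadius_le_bound {T : E →L[ℂ] E} {c : ℝ} (hc : 0 ≤ c)
    (h : ∀ x, ‖x‖ = 1 → ‖(inner ℂ (T x) x : ℂ)‖ ≤ c) : numRadius T ≤ c :=
  Real.sSup_le (by rintro r ⟨x, hx, rfl⟩; exact h x hx) hc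

lemma norm_inner_self_le_numRadius_mul_sq (T : E →L[ℂ] E) (x : E) :
    ‖(inner ℂ (T x) x : ℂ)‖ ≤ numRadius T * ‖x‖ ^ 2 := by
  rcases eq_or_ne x 0 with rfl | hx
  · simp
  have hx' : ‖x‖ ≠ 0 := norm_ne_zero_iff.mpr hx
  have hunit : ‖(‖x‖⁻¹ : ℂ) • x‖ = 1 := by
    rw [norm_smul, norm_inv, Complex.norm_real, norm_norm, inv_mul_cancel₀ hx']
  have key := norm_inner_self_le_numRadius T hunit
  rw [map_smul, inner_smul_left, inner_smul_right, norm_mul, norm_mul, RCLike.norm_conj,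
    norm_inv, Complex.norm_real, norm_norm] at key
  rw [← mul_inv_le_iff₀ (by positivity)]
  calc ‖(inner ℂ (T x) x : ℂ)‖ * (‖x‖ ^ 2)⁻¹
      = ‖x‖⁻¹ * (‖x‖⁻¹ * ‖(inner ℂ (T x) x : ℂ)‖) := by ring
    _ ≤ numRadius T := key

lemma numRadius_neg (T : E →L[ℂ] E) : numRadius (-T) = numRadius T := by
  simp only [numRadius, neg_apply, inner_neg_left, norm_neg]

lemma numRadius_eq_of_semiconj (U : E ≃ₗᵢ[ℂ] F) {S : F →L[ℂ] F} {T : E →L[ℂ] E}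
    (h : Function.Semiconj U T S) : numRadius S = numRadius T := by
  have inner_eq (x : E) : (inner ℂ (S (U x)) (U x) : ℂ) = inner ℂ (T x) x := by
    rw [← h x, U.inner_map_map]
  apply le_antisymm
  · refine numRadius_le_bound (numRadius_nonneg T) fun y hy => ?_
    rw [← U.apply_symm_apply y, inner_eq]
    exact norm_inner_self_le_numRadius T ((U.symm.norm_map y).trans hy)
  · refine numRadius_le_bound (numRadius_nonneg S) fun x hx => ?_
    rw [← inner_eq]
    exact norm_inner_self_le_numRadius S ((U.norm_map x).trans hx)

lemma blockOp_apply (A : E →L[ℂ] E) (B : F →L[ℂ] E) (C : E →L[ℂ] F) (D : F →L[ℂ] F)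
    (z : WithLp 2 (E × F)) :
    blockOp A B C D z = toLp 2 (A z.fst + B z.snd, C z.fst + D z.snd) :=
  rfl

lemma numRadius_blockOp_diag (A : E →L[ℂ] E) (D : F →L[ℂ] F) :
    numRadius (blockOp A 0 0 D) = max (numRadius A) (numRadius D) := by
  have inner_eq (z : WithLp 2 (E × F)) : (inner ℂ (blockOp A 0 0 D z) z : ℂ) =
      inner ℂ (A z.fst) z.fst + inner ℂ (D z.snd) z.snd := by
    simp [blockOp_apply]
  apply le_antisymm
  · refine numRadius_le_bound (le_max_of_le_left (numRadius_nonneg A)) fun z hz => ?_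
    calc ‖(inner ℂ (blockOp A 0 0 D z) z : ℂ)‖
        ≤ numRadius A * ‖z.fst‖ ^ 2 + numRadius D * ‖z.snd‖ ^ 2 := by
          rw [inner_eq]
          exact (norm_add_le _ _).trans (add_le_add
            (norm_inner_self_le_numRadius_mul_sq A _) (norm_inner_self_le_numRadius_mul_sq D _))
      _ ≤ max (numRadius A) (numRadius D) * (‖z.fst‖ ^ 2 + ‖z.snd‖ ^ 2) := by
          rw [mul_add]
          gcongr
          exacts [le_max_left _ _, le_max_right _ _]
      _ = max (numRadius A) (numRadius D) := by
          rw [← prod_norm_sq_eq_of_L2, hz, one_pow, mul_one]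
  · refine max_le (numRadius_le_bound (numRadius_nonneg _) fun x hx => ?_)
      (numRadius_le_bound (numRadius_nonneg _) fun y hy => ?_)
    · simpa [inner_eq] using norm_inner_self_le_numRadius (blockOp A 0 0 D)
        (x := toLp 2 (x, 0)) (by rw [norm_toLp_fst, hx])
    · simpa [inner_eq] using norm_inner_self_le_numRadius (blockOp A 0 0 D)
        (x := toLp 2 (0, y)) (by rw [norm_toLp_snd, hy])

variable (E) in
def hadamardₗ : WithLp 2 (E × E) →ₗ[ℂ] WithLp 2 (E × E) where
  toFun z := toLp 2 ((√2)⁻¹ • (z.fst + z.snd), (√2)⁻¹ • (z.fst - z.snd))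
  map_add' z w := by
    rw [WithLp.ext_iff]
    simp only [add_fst, add_snd, ofLp_add, Prod.mk_add_mk]
    congr 1 <;> module
  map_smul' a z := by
    rw [WithLp.ext_iff]
    simp only [smul_fst, smul_snd, ofLp_smul, Prod.smul_mk, RingHom.id_apply]
    congr 1 <;> module

lemma hadamardₗ_apply (z : WithLp 2 (E × E)) :
    hadamardₗ E z = toLp 2 ((√2)⁻¹ • (z.fst + z.snd), (√2)⁻¹ • (z.fst - z.snd)) :=
  rfl

lemma norm_hadamardₗ (z : WithLp 2 (E × E)) : ‖hadamardₗ E z‖ = ‖z‖ := by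
  rw [← sq_eq_sq₀ (norm_nonneg _) (norm_nonneg _), prod_norm_sq_eq_of_L2, prod_norm_sq_eq_of_L2]
  have := parallelogram_law_with_norm ℂ z.fst z.snd
  simp only [hadamardₗ_apply, toLp_fst, toLp_snd, norm_smul, mul_pow, norm_inv, Real.norm_eq_abs,
    abs_of_nonneg (Real.sqrt_nonneg 2), inv_pow, Real.sq_sqrt zero_le_two]
  linarith

lemma hadamardₗ_hadamardₗ (z : WithLp 2 (E × E)) : hadamardₗ E (hadamardₗ E z) = z := by
  rw [WithLp.ext_iff]
  simp only [hadamardₗ_apply, toLp_fst, toLp_snd, ofLp_toLp]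
  ext <;> simp only [ofLp_fst, ofLp_snd] <;> match_scalars <;> field_simp <;> norm_num

variable (E) in
def hadamard : WithLp 2 (E × E) ≃ₗᵢ[ℂ] WithLp 2 (E × E) :=
  LinearIsometryEquiv.ofSurjective ⟨hadamardₗ E, norm_hadamardₗ⟩
    (Function.Involutive.surjective hadamardₗ_hadamardₗ)

lemma hadamard_apply (z : WithLp 2 (E × E)) :
    hadamard E z = toLp 2 ((√2)⁻¹ • (z.fst + z.snd), (√2)⁻¹ • (z.fst - z.snd)) :=
  rfl

lemma semiconj_hadamard_blockOp (A B : E →L[ℂ] E) :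
    Function.Semiconj (hadamard E) (blockOp (A + B) 0 0 (A - B)) (blockOp A B B A) := by
  intro z
  rw [WithLp.ext_iff]
  simp only [blockOp_apply, hadamard_apply, toLp_fst, toLp_snd, ofLp_toLp, map_smul_of_tower,
    map_add, map_sub, add_apply, sub_apply, zero_apply, add_zero, zero_add]
  ext <;> module

lemma numRadius_blockOp_symm (A B : E →L[ℂ] E) :
    numRadius (blockOp A B B A) = max (numRadius (A + B)) (numRadius (A - B)) := by
  rw [numRadius_eq_of_semiconj (hadamard E) (semiconj_hadamard_blockOp A B),
    numRadius_blockOp_diag]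

end

theorem numRadius_blockSymm (A B : H →L[ℂ] H) :
    numRadius (blockOp A B B A) = max (numRadius (A + B)) (numRadius (A - B)) ∧
      numRadius (blockOp 0 B B 0) = numRadius B := by
  refine ⟨numRadius_blockOp_symm A B, ?_⟩
  rw [numRadius_blockOp_symm, zero_add, zero_sub, numRadius_neg, max_self]
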